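/- Let A, B, K : ℝ^m → matrices (of compatible sizes n×n, n×p, p×n over ℝ), let M : ℝ^m → Matrix (Fin n) (Fin n) ℝ be differentiable with M(σ) symmetric positive definite for each σ, and let λ ∈ ℝ. Define W(σ) = M(σ)⁻¹ and L(σ) = K(σ)W(σ), and set 𝒜(σ) = A(σ) + B(σ)K(σ). Fix σ ∈ ℝ^m and ρ ∈ ℝ^m. Then the matrix inequality M(σ)𝒜(σ) + 𝒜(σ)ᵀM(σ) + 2λM(σ) + Σᵢ ρᵢ·(∂M/∂σᵢ)(σ) ≺ 0 holds if and only if A(σ)W(σ) + B(σ)L(σ) + (A(σ)W(σ) + B(σ)L(σ))ᵀ + 2λW(σ) − Σᵢ ρᵢ·(∂W/∂σᵢ)(σ) ≺ 0, where (∂W/∂σᵢ)(σ) = −W(σ)(∂M/∂σᵢ)(σ)W(σ). -/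

import Mathlib

/-! Congruence by the symmetric invertible matrix `W = M⁻¹` preserves definiteness, and since
`W M = M W = 1` it sends `M𝒜 + 𝒜ᵀM + 2λM + ∑ᵢ ρᵢ ∂ᵢM` to `𝒜W + (𝒜W)ᵀ + 2λW + ∑ᵢ ρᵢ W ∂ᵢM W`,
which is the second matrix once `𝒜W = AW + BL` and `∂ᵢW = -W ∂ᵢM W` are substituted. -/

open Matrix Set

/-- Partial derivative of a matrix-valued function `M` with respect to the `i`-th
coordinate of its argument, taken entrywise. -/
noncomputable def matPartial {m n p : ℕ} (M : (Fin m → ℝ) → Matrix (Fin n) (Fin p) ℝ)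
    (i : Fin m) (σ : Fin m → ℝ) : Matrix (Fin n) (Fin p) ℝ :=
  Matrix.of fun j k => fderiv ℝ (fun σ' => M σ' j k) σ (Pi.single i 1)

namespace Matrix

variable {ι R : Type*} [Fintype ι] [DecidableEq ι] [CommRing R]

theorem nonsing_inv_mul_lyapunov_mul_nonsing_inv {N : Matrix ι ι R} (hN : Nᵀ = N)
    (hdet : IsUnit N.det) (F D : Matrix ι ι R) (c : R) :
    N⁻¹ * (N * F + Fᵀ * N + c • N + D) * N⁻¹
      = F * N⁻¹ + (F * N⁻¹)ᵀ + c • N⁻¹ + N⁻¹ * D * N⁻¹ := by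
  have hinvT : (N⁻¹)ᵀ = N⁻¹ := by rw [transpose_nonsing_inv, hN]
  simp only [Matrix.add_mul, Matrix.mul_add, transpose_mul, hinvT, Matrix.mul_smul,
    Matrix.smul_mul, Matrix.mul_assoc, mul_nonsing_inv _ hdet,
    nonsing_inv_mul_cancel_left _ _ hdet, Matrix.mul_one]

end Matrix

theorem lpv_congruence_transformation_general {m n p : ℕ}
    (A : (Fin m → ℝ) → Matrix (Fin n) (Fin n) ℝ)
    (B : (Fin m → ℝ) → Matrix (Fin n) (Fin p) ℝ)
    (K : (Fin m → ℝ) → Matrix (Fin p) (Fin n) ℝ)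
    (M : (Fin m → ℝ) → Matrix (Fin n) (Fin n) ℝ)
    (hMpos : ∀ σ, (M σ).PosDef)
    (lam : ℝ) (σ ρ : Fin m → ℝ) :
    (-(M σ * (A σ + B σ * K σ) + (A σ + B σ * K σ)ᵀ * M σ + (2 * lam) • M σ +
        ∑ i, ρ i • matPartial M i σ)).PosDef ↔
    (-(A σ * (M σ)⁻¹ + B σ * (K σ * (M σ)⁻¹) +
        (A σ * (M σ)⁻¹ + B σ * (K σ * (M σ)⁻¹))ᵀ + (2 * lam) • (M σ)⁻¹ -
        ∑ i, ρ i • (-((M σ)⁻¹ * matPartial M i σ * (M σ)⁻¹)))).PosDef := by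
  have hM := hMpos σ
  have hdet : IsUnit (M σ).det := (isUnit_iff_isUnit_det _).1 hM.isUnit
  have hMT : (M σ)ᵀ = M σ := by simpa using hM.isHermitian.eq
  have hW : IsUnit (M σ)⁻¹ := isUnit_nonsing_inv_iff.2 hM.isUnit
  have hWstar : star (M σ)⁻¹ = (M σ)⁻¹ := hM.inv.isHermitian.eq
  have hsum : ∑ i, ρ i • (-((M σ)⁻¹ * matPartial M i σ * (M σ)⁻¹))
      = -((M σ)⁻¹ * (∑ i, ρ i • matPartial M i σ) * (M σ)⁻¹) := by
    simp only [Matrix.mul_sum, Matrix.sum_mul, Matrix.mul_smul, Matrix.smul_mul, smul_neg,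
      Finset.sum_neg_distrib]
  rw [← hW.posDef_star_left_conjugate_iff, hWstar, Matrix.mul_neg, Matrix.neg_mul,
    nonsing_inv_mul_lyapunov_mul_nonsing_inv hMT hdet, hsum, sub_neg_eq_add, Matrix.add_mul,
    Matrix.mul_assoc (B σ)]

/-- **Congruence transformation of the LPV synthesis LMI.** With `W(σ) = M(σ)⁻¹`,
`L(σ) = K(σ)W(σ)`, `𝒜(σ) = A(σ) + B(σ)K(σ)` and `∂W/∂σᵢ = -W (∂M/∂σᵢ) W`, the matrix
inequality `M𝒜 + 𝒜ᵀM + 2λM + ∑ᵢ ρᵢ ∂M/∂σᵢ ≺ 0` holds iff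
`AW + BL + (AW + BL)ᵀ + 2λW - ∑ᵢ ρᵢ ∂W/∂σᵢ ≺ 0` (negative definiteness stated as
positive definiteness of the negation). -/
theorem lpv_congruence_transformation {m n p : ℕ}
    (A : (Fin m → ℝ) → Matrix (Fin n) (Fin n) ℝ)
    (B : (Fin m → ℝ) → Matrix (Fin n) (Fin p) ℝ)
    (K : (Fin m → ℝ) → Matrix (Fin p) (Fin n) ℝ)
    (M : (Fin m → ℝ) → Matrix (Fin n) (Fin n) ℝ)
    (hMdiff : ∀ j k, Differentiable ℝ fun σ => M σ j k)
    (hMpos : ∀ σ, (M σ).PosDef)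
    (lam : ℝ) (σ ρ : Fin m → ℝ) :
    (-(M σ * (A σ + B σ * K σ) + (A σ + B σ * K σ)ᵀ * M σ + (2 * lam) • M σ +
        ∑ i, ρ i • matPartial M i σ)).PosDef ↔
    (-(A σ * (M σ)⁻¹ + B σ * (K σ * (M σ)⁻¹) +
        (A σ * (M σ)⁻¹ + B σ * (K σ * (M σ)⁻¹))ᵀ + (2 * lam) • (M σ)⁻¹ -
        ∑ i, ρ i • (-((M σ)⁻¹ * matPartial M i σ * (M σ)⁻¹)))).PosDef :=
  lpv_congruence_transformation_general A B K M hMpos lam σ ρ
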